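/- arXiv:2308.14558 — 2 statements merged into one kernel-verified Lean document; each statement's English description precedes it below -/
import Mathlib

section
/- Let r ≥ 1 and let R = {v ∈ ℤ² : 0 < d₁(v, 0) ≤ r}, where d₁((i₁,j₁),(i₂,j₂)) = |i₁−i₂| + |j₁−j₂|. Then for every q ≥ 2, the supremum of R_q(X) over all R-recoverable systems X on ℤ² over alphabets of size q equals 1 − 1/D₁(r), where D₁(r) = (r+1)²/2 if r is odd and D₁(r) = r²/2 + r + 1 if r is even. -/
/-!
Let `Λ ⊆ ℤ²` be a lattice of index `D = D₁(r)` whose nonzero vectors all have `l₁`-norm `> r`,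
and `A ∋ 0` a set of representatives of `ℤ² / Λ` of `l₁`-diameter `≤ r`: for odd `r = 2k - 1`,
`Λ = {(x, y) : x + y ≡ x - y ≡ 0 mod 2k}` with a rotated square as `A`; for even `r = 2s`,
the centres of the perfect tiling of `ℤ²` by `l₁`-balls of radius `s`, with `A` such a ball.

Upper bound: in an `R`-recoverable system the symbol at a point of `Λ ∩ [r, n - r)²` is a
function of the symbols in its `R`-neighbourhood, which lies in the block and misses `Λ`. Hence
`|B_{[n]²}(X)| ≤ q ^ (n² - |Λ ∩ [r, n - r)²|)` and `R_q(X) ≤ 1 - 1/D`.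

Lower bound: the code over `ZMod q` in which the symbols of every translate `λ + A` sum to zero is
`R`-recoverable, since each position lies in some translate whose other points are within distance
`r`, and its symbols off `Λ` can be prescribed arbitrarily, so its rate is at least `1 - 1/D`.
-/

/-- An `R`-recoverable system on `ℤ²`: every symbol `x_v` is a function of the
symbols in positions `v + R`. -/
def IsRecoverable2 {Q : Type*} (R : Set (ℤ × ℤ)) (X : Set (ℤ × ℤ → Q)) : Prop :=
  ∀ v : ℤ × ℤ, ∃ f : (ℤ × ℤ → Q) → Q,
    (∀ x y : ℤ × ℤ → Q, (∀ u ∈ R, x (v + u) = y (v + u)) → f x = f y) ∧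
    ∀ x ∈ X, f x = x v

/-- `|B_{[n]²}(X)|`: restrictions of elements of `X` to `{0,…,n−1}²`. -/
noncomputable def blockCount2 {Q : Type*} (X : Set (ℤ × ℤ → Q)) (n : ℕ) : ℕ :=
  Nat.card ↥((fun x : ℤ × ℤ → Q =>
    fun p : Fin n × Fin n => x (((p.1 : ℕ) : ℤ), ((p.2 : ℕ) : ℤ))) '' X)

/-- The rate `R_q(X) = limsup_{n→∞} (1/n²) log_q |B_{[n]²}(X)|`. -/
noncomputable def rate2 (q : ℕ) {Q : Type*} (X : Set (ℤ × ℤ → Q)) : ℝ :=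
  Filter.limsup (fun n : ℕ => Real.logb q (blockCount2 X n) / ((n : ℝ) ^ 2)) Filter.atTop

/-- The maximum size of an anticode of diameter `r` in the `l₁` metric on `ℤ²`. -/
noncomputable def D1 (r : ℕ) : ℝ :=
  if r % 2 = 1 then ((r : ℝ) + 1) ^ 2 / 2 else (r : ℝ) ^ 2 / 2 + (r : ℝ) + 1

open Filter Topology Finset

def l1PuncturedBall (r : ℤ) : Set (ℤ × ℤ) :=
  {v | v ≠ 0 ∧ |v.1| + |v.2| ≤ r}

def recoverableRates (r q : ℕ) : Set ℝ :=
  {x | ∃ (Q : Type) (_ : Fintype Q), Fintype.card Q = q ∧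
    ∃ X : Set (ℤ × ℤ → Q), IsRecoverable2 (l1PuncturedBall r) X ∧ rate2 q X = x}

-- The lattice with basis `(a, 0), (b, c)` in Hermite normal form; its index is `a * c`.
def hnfLattice (a c b : ℤ) : AddSubgroup (ℤ × ℤ) where
  carrier := {v | c ∣ v.2 ∧ a ∣ v.1 - b * v.2}
  add_mem' := by
    rintro v w ⟨hv₂, hv₁⟩ ⟨hw₂, hw₁⟩
    refine ⟨dvd_add hv₂ hw₂, ?_⟩
    rw [show (v + w).1 - b * (v + w).2 = (v.1 - b * v.2) + (w.1 - b * w.2) by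
      simp only [Prod.fst_add, Prod.snd_add]; ring]
    exact dvd_add hv₁ hw₁
  zero_mem' := by simp
  neg_mem' := by
    rintro v ⟨h₂, h₁⟩
    refine ⟨(dvd_neg).2 h₂, ?_⟩
    rw [show (-v).1 - b * (-v).2 = -(v.1 - b * v.2) by
      simp only [Prod.fst_neg, Prod.snd_neg]; ring]
    exact (dvd_neg).2 h₁

lemma mem_hnfLattice {a c b : ℤ} {v : ℤ × ℤ} :
    v ∈ hnfLattice a c b ↔ c ∣ v.2 ∧ a ∣ v.1 - b * v.2 :=
  Iff.rfl

open Classical in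
noncomputable def latticePts (Λ : AddSubgroup (ℤ × ℤ)) (lo hi : ℤ) : Finset (ℤ × ℤ) :=
  {v ∈ Ico lo hi ×ˢ Ico lo hi | v ∈ Λ}

lemma mem_latticePts {Λ : AddSubgroup (ℤ × ℤ)} {lo hi : ℤ} {v : ℤ × ℤ} :
    v ∈ latticePts Λ lo hi ↔ v ∈ Ico lo hi ×ˢ Ico lo hi ∧ v ∈ Λ := by
  simp [latticePts]

lemma latticePts_subset {Λ : AddSubgroup (ℤ × ℤ)} {lo hi : ℤ} {n : ℕ} (hlo : 0 ≤ lo)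
    (hhi : hi ≤ n) : latticePts Λ lo hi ⊆ Ico 0 (n : ℤ) ×ˢ Ico 0 (n : ℤ) := by
  intro v hv
  simp only [mem_latticePts, mem_product, mem_Ico] at hv ⊢
  omega

lemma Int.card_filter_Ico_dvd_sub_mul_mem_Icc {M : ℤ} (hM : 0 < M) (t : ℤ) {lo hi : ℤ}
    (h : lo ≤ hi) :
    #{x ∈ Ico lo hi | M ∣ x - t} * M ∈ Set.Icc (hi - lo - M) (hi - lo + M) := by
  have hcount := Int.Ico_filter_modEq_card lo hi hM t
  simp only [Int.modEq_comm (b := t), Int.modEq_iff_dvd] at hcount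
  rw [hcount]
  have hM' : (0 : ℚ) < M := by exact_mod_cast hM
  set α : ℚ := (hi - t) / M
  set β : ℚ := (lo - t) / M
  have hαβ : (hi - lo : ℚ) = (α - β) * M := by simp only [α, β]; field_simp; ring
  have hlo : (lo : ℚ) ≤ hi := by exact_mod_cast h
  have hβα : ⌈β⌉ ≤ ⌈α⌉ := Int.ceil_mono (by simp only [α, β]; gcongr)
  rw [max_eq_left (sub_nonneg.2 hβα)]
  have hα₁ := Int.le_ceil α
  have hα₂ := Int.ceil_lt_add_one α
  have hβ₁ := Int.le_ceil β
  have hβ₂ := Int.ceil_lt_add_one β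
  constructor <;> qify <;> rw [hαβ] <;> nlinarith

lemma card_latticePts_hnfLattice (a c b lo hi : ℤ) :
    #(latticePts (hnfLattice a c b) lo hi) =
      ∑ y ∈ Ico lo hi with c ∣ y, #{x ∈ Ico lo hi | a ∣ x - b * y} := by
  classical
  simp only [latticePts, card_filter, sum_product_right, sum_filter]
  refine sum_congr rfl fun y _ => ?_
  split_ifs with hy <;> simp [mem_hnfLattice, hy]

section hnfCount
variable {a c : ℤ} (ha : 0 < a) (hc : 0 < c) (b : ℤ) {lo hi : ℤ}
include ha hc

lemma sub_mul_sub_le_card_latticePts_hnfLattice_mul (h : a ≤ hi - lo) :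
    (hi - lo - a) * (hi - lo - c) ≤ #(latticePts (hnfLattice a c b) lo hi) * (a * c) := by
  have hlo : lo ≤ hi := by linarith
  have hcols := Int.card_filter_Ico_dvd_sub_mul_mem_Icc hc 0 hlo
  simp only [sub_zero] at hcols
  rw [card_latticePts_hnfLattice]
  push_cast
  calc (hi - lo - a) * (hi - lo - c)
      ≤ (hi - lo - a) * (#{y ∈ Ico lo hi | c ∣ y} * c) :=
        mul_le_mul_of_nonneg_left hcols.1 (by linarith)
    _ = (∑ y ∈ Ico lo hi with c ∣ y, (hi - lo - a)) * c := by
        rw [sum_const, nsmul_eq_mul]; ring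
    _ ≤ (∑ y ∈ Ico lo hi with c ∣ y, (#{x ∈ Ico lo hi | a ∣ x - b * y} : ℤ) * a) * c := by
        gcongr with y
        exact (Int.card_filter_Ico_dvd_sub_mul_mem_Icc ha (b * y) hlo).1
    _ = _ := by simp only [sum_mul, mul_assoc]

lemma card_latticePts_hnfLattice_mul_le (h : lo ≤ hi) :
    #(latticePts (hnfLattice a c b) lo hi) * (a * c) ≤ (hi - lo + a) * (hi - lo + c) := by
  have hcols := Int.card_filter_Ico_dvd_sub_mul_mem_Icc hc 0 h
  simp only [sub_zero] at hcols
  rw [card_latticePts_hnfLattice]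
  push_cast
  calc (∑ y ∈ Ico lo hi with c ∣ y, (#{x ∈ Ico lo hi | a ∣ x - b * y} : ℤ)) * (a * c)
      = (∑ y ∈ Ico lo hi with c ∣ y, (#{x ∈ Ico lo hi | a ∣ x - b * y} : ℤ) * a) * c := by
        simp only [sum_mul, mul_assoc]
    _ ≤ (∑ y ∈ Ico lo hi with c ∣ y, (hi - lo + a)) * c := by
        gcongr with y
        exact (Int.card_filter_Ico_dvd_sub_mul_mem_Icc ha (b * y) h).2
    _ = (hi - lo + a) * (#{y ∈ Ico lo hi | c ∣ y} * c) := by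
        rw [sum_const, nsmul_eq_mul]; ring
    _ ≤ (hi - lo + a) * (hi - lo + c) :=
        mul_le_mul_of_nonneg_left hcols.2 (by linarith)

end hnfCount

lemma tendsto_sub_mul_sub_div_sq (K₁ K₂ : ℝ) :
    Tendsto (fun n : ℕ => (n - K₁) * (n - K₂) / n ^ 2) atTop (𝓝 1) := by
  have h : Tendsto (fun n : ℕ => (1 - K₁ / n) * (1 - K₂ / n)) atTop (𝓝 ((1 - 0) * (1 - 0))) :=
    (tendsto_const_nhds.sub (tendsto_const_div_atTop_nhds_zero_nat K₁)).mul
      (tendsto_const_nhds.sub (tendsto_const_div_atTop_nhds_zero_nat K₂))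
  rw [sub_zero, mul_one] at h
  refine h.congr' ((eventually_ne_atTop 0).mono fun n hn => ?_)
  field_simp

lemma tendsto_sq_sub_card_latticePts_hnfLattice {a c : ℤ} (ha : 0 < a) (hc : 0 < c) (b : ℤ)
    (d : ℕ) :
    Tendsto (fun n : ℕ => ((n * n - #(latticePts (hnfLattice a c b) d (n - d)) : ℕ) : ℝ) / n ^ 2)
      atTop (𝓝 (1 - 1 / (a * c))) := by
  set N := fun n : ℕ => #(latticePts (hnfLattice a c b) d (n - d))
  have hlow : ∀ᶠ n : ℕ in atTop,
      (n - (2 * d + a)) * (n - (2 * d + c)) / n ^ 2 ≤ N n * (a * c) / (n ^ 2 : ℝ) := by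
    filter_upwards [eventually_ge_atTop (2 * d + a.toNat)] with n hn
    refine div_le_div_of_nonneg_right ?_ (sq_nonneg _)
    have := sub_mul_sub_le_card_latticePts_hnfLattice_mul ha hc b
      (lo := d) (hi := n - d) (by omega)
    have key : ((n - (2 * d + a)) * (n - (2 * d + c)) : ℤ) ≤ N n * (a * c) := by linarith
    exact_mod_cast key
  have hupp : ∀ᶠ n : ℕ in atTop,
      N n * (a * c) / (n ^ 2 : ℝ) ≤ (n - (2 * d - a)) * (n - (2 * d - c)) / n ^ 2 := by
    filter_upwards [eventually_ge_atTop (2 * d)] with n hn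
    refine div_le_div_of_nonneg_right ?_ (sq_nonneg _)
    have := card_latticePts_hnfLattice_mul_le ha hc b (lo := d) (hi := n - d) (by omega)
    have key : N n * (a * c) ≤ ((n - (2 * d - a)) * (n - (2 * d - c)) : ℤ) := by linarith
    exact_mod_cast key
  have hN : Tendsto (fun n : ℕ => (N n : ℝ) / n ^ 2) atTop (𝓝 (1 / (a * c))) := by
    have hac : (a * c : ℝ) ≠ 0 := by positivity
    refine ((tendsto_of_tendsto_of_tendsto_of_le_of_le' (tendsto_sub_mul_sub_div_sq _ _)
      (tendsto_sub_mul_sub_div_sq _ _) hlow hupp).div_const (a * c : ℝ)).congr fun n => ?_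
    field_simp
  refine (tendsto_const_nhds.sub hN).congr' ((eventually_ne_atTop 0).mono fun n hn => ?_)
  have hNle : N n ≤ n * n := by
    calc N n ≤ #(Ico 0 (n : ℤ) ×ˢ Ico 0 (n : ℤ)) :=
          card_le_card (latticePts_subset (by positivity) (by omega))
      _ = n * n := by simp
  show _ = ((n * n - N n : ℕ) : ℝ) / n ^ 2
  rw [Nat.cast_sub hNle]
  field_simp
  push_cast
  ring

section Restriction
variable {ι Q : Type*} [Fintype ι] [Fintype Q] [DecidableEq ι]

lemma natCard_le_pow_of_eqOn_compl {Y : Set (ι → Q)} (S : Finset ι)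
    (hY : ∀ y ∈ Y, ∀ y' ∈ Y, (∀ i ∉ S, y i = y' i) → y = y') :
    Nat.card Y ≤ Fintype.card Q ^ (Fintype.card ι - #S) := by
  have hinj : Function.Injective fun (y : Y) (i : {i // i ∉ S}) => (y : ι → Q) i :=
    fun y y' h => Subtype.ext (hY y y.2 y' y'.2 fun i hi => congrFun h ⟨i, hi⟩)
  calc Nat.card Y ≤ Nat.card ({i // i ∉ S} → Q) := Nat.card_le_card_of_injective _ hinj
    _ = _ := by
      rw [Nat.card_eq_fintype_card, Fintype.card_fun, Fintype.card_subtype_compl,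
        Fintype.card_coe]

lemma pow_le_natCard_of_forall_exists_eqOn_compl {Y : Set (ι → Q)} (S : Finset ι)
    (hY : ∀ z : {i // i ∉ S} → Q, ∃ y ∈ Y, ∀ i (hi : i ∉ S), y i = z ⟨i, hi⟩) :
    Fintype.card Q ^ (Fintype.card ι - #S) ≤ Nat.card Y := by
  have hsurj : Function.Surjective fun (y : Y) (i : {i // i ∉ S}) => (y : ι → Q) i := by
    intro z
    obtain ⟨y, hy, hyz⟩ := hY z
    exact ⟨⟨y, hy⟩, funext fun i => hyz i i.2⟩
  calc Fintype.card Q ^ (Fintype.card ι - #S) = Nat.card ({i // i ∉ S} → Q) := by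
        rw [Nat.card_eq_fintype_card, Fintype.card_fun, Fintype.card_subtype_compl,
          Fintype.card_coe]
    _ ≤ Nat.card Y := Nat.card_le_card_of_surjective _ hsurj

end Restriction

def cell (n : ℕ) (p : Fin n × Fin n) : ℤ × ℤ := ((p.1 : ℕ), (p.2 : ℕ))

lemma blockCount2_eq_natCard_image {Q : Type*} (X : Set (ℤ × ℤ → Q)) (n : ℕ) :
    blockCount2 X n = Nat.card ((· ∘ cell n) '' X) :=
  rfl

lemma cell_injective (n : ℕ) : Function.Injective (cell n) := by
  rintro ⟨i, j⟩ ⟨i', j'⟩ h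
  simp only [cell, Prod.mk.injEq, Nat.cast_inj, Fin.val_inj] at h
  rw [h.1, h.2]

lemma mem_range_cell {n : ℕ} {v : ℤ × ℤ} :
    v ∈ Set.range (cell n) ↔ v ∈ Ico 0 (n : ℤ) ×ˢ Ico 0 (n : ℤ) := by
  simp only [Set.mem_range, mem_product, mem_Ico]
  constructor
  · rintro ⟨p, rfl⟩
    simp [cell]
  · rintro ⟨⟨h₁, h₁'⟩, h₂, h₂'⟩
    exact ⟨(⟨v.1.toNat, by omega⟩, ⟨v.2.toNat, by omega⟩), by ext <;> simp [cell] <;> omega⟩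

lemma card_preimage_cell {n : ℕ} (T : Finset (ℤ × ℤ))
    (hT : T ⊆ Ico 0 (n : ℤ) ×ˢ Ico 0 (n : ℤ)) :
    #(T.preimage (cell n) (cell_injective n).injOn) = #T := by
  classical
  rw [card_preimage, filter_true_of_mem fun v hv => mem_range_cell.2 (hT hv)]

lemma blockCount2_le_card_pow {Q : Type*} [Fintype Q] (X : Set (ℤ × ℤ → Q)) (n : ℕ) :
    blockCount2 X n ≤ Fintype.card Q ^ (n * n) := by
  classical
  have := natCard_le_pow_of_eqOn_compl (Y := (· ∘ cell n) '' X) ∅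
    fun y _ y' _ h => funext fun i => h i (notMem_empty i)
  rwa [card_empty, Nat.sub_zero, Fintype.card_prod, Fintype.card_fin] at this

lemma blockCount2_le_of_isRecoverable2 {Q : Type*} [Fintype Q] {R : Set (ℤ × ℤ)}
    {Λ : AddSubgroup (ℤ × ℤ)} {ρ : ℕ} (hR : ∀ u ∈ R, |u.1| ≤ ρ ∧ |u.2| ≤ ρ)
    (hRΛ : ∀ u ∈ R, u ∉ Λ) {X : Set (ℤ × ℤ → Q)} (hX : IsRecoverable2 R X) (n : ℕ) :
    blockCount2 X n ≤ Fintype.card Q ^ (n * n - #(latticePts Λ ρ (n - ρ))) := by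
  classical
  have hsub : latticePts Λ ρ (n - ρ) ⊆ Ico 0 (n : ℤ) ×ˢ Ico 0 (n : ℤ) :=
    latticePts_subset (by positivity) (by omega)
  set S := (latticePts Λ ρ (n - ρ)).preimage (cell n) (cell_injective n).injOn
  rw [← card_preimage_cell _ hsub, blockCount2_eq_natCard_image]
  change _ ≤ _ ^ (_ - #S)
  convert natCard_le_pow_of_eqOn_compl S ?_ using 2
  · simp
  rintro _ ⟨x, hx, rfl⟩ _ ⟨x', hx', rfl⟩ hxx'
  funext p
  by_cases hp : p ∈ S
  swap
  · exact hxx' p hp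
  have hpΛ := mem_latticePts.1 (mem_preimage.1 hp)
  simp only [mem_product, mem_Ico] at hpΛ
  obtain ⟨f, hf, hfX⟩ := hX (cell n p)
  show x (cell n p) = x' (cell n p)
  rw [← hfX x hx, ← hfX x' hx']
  refine hf x x' fun u hu => ?_
  -- `cell n p + u` lies in the block (as `cell n p` is `ρ` away from its border) and off `Λ`
  obtain ⟨p', hp'⟩ : cell n p + u ∈ Set.range (cell n) := by
    rw [mem_range_cell]
    have := hR u hu
    simp only [mem_product, mem_Ico, Prod.fst_add, Prod.snd_add, abs_le] at this ⊢
    omega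
  have hp'S : p' ∉ S := by
    rw [mem_preimage, hp', mem_latticePts]
    exact fun h => hRΛ u hu (by simpa using Λ.sub_mem h.2 hpΛ.2)
  simpa [hp'] using hxx' p' hp'S

structure IsLatticeTile (Λ : AddSubgroup (ℤ × ℤ)) (A : Finset (ℤ × ℤ)) : Prop where
  zero_mem : 0 ∈ A
  existsUnique_sub_mem : ∀ w, ∃! u, u ∈ A ∧ w - u ∈ Λ

section Tile
variable {Λ : AddSubgroup (ℤ × ℤ)} {A : Finset (ℤ × ℤ)} {r : ℤ}

lemma IsLatticeTile.eq_zero_of_mem (hA : IsLatticeTile Λ A) {u : ℤ × ℤ} (hu : u ∈ A)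
    (huΛ : u ∈ Λ) : u = 0 :=
  (hA.existsUnique_sub_mem 0).unique ⟨hu, by simpa using Λ.neg_mem huΛ⟩
    ⟨hA.zero_mem, by simp⟩

lemma eq_of_sub_mem_of_abs_add_abs_le (hΛ : ∀ v ∈ Λ, v ≠ 0 → r < |v.1| + |v.2|)
    (hA : ∀ u ∈ A, ∀ u' ∈ A, |u.1 - u'.1| + |u.2 - u'.2| ≤ r) :
    ∀ u ∈ A, ∀ u' ∈ A, u - u' ∈ Λ → u = u' := by
  intro u hu u' hu' h
  by_contra hne
  have := hΛ _ h (sub_ne_zero.2 hne)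
  have := hA u hu u' hu'
  simp only [Prod.fst_sub, Prod.snd_sub] at *
  linarith

lemma isLatticeTile_of_abs_add_abs_le (hΛ : ∀ v ∈ Λ, v ≠ 0 → r < |v.1| + |v.2|)
    (hA : ∀ u ∈ A, ∀ u' ∈ A, |u.1 - u'.1| + |u.2 - u'.2| ≤ r) (h0 : 0 ∈ A)
    (hcov : ∀ w, ∃ u ∈ A, w - u ∈ Λ) : IsLatticeTile Λ A where
  zero_mem := h0
  existsUnique_sub_mem w := by
    obtain ⟨u, hu, huΛ⟩ := hcov w
    refine ⟨u, ⟨hu, huΛ⟩, fun u' ⟨hu', hu'Λ⟩ => ?_⟩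
    exact eq_of_sub_mem_of_abs_add_abs_le hΛ hA u' hu' u hu (by simpa using Λ.sub_mem huΛ hu'Λ)

end Tile

def tilingCode (G : Type*) [AddCommGroup G] (Λ : AddSubgroup (ℤ × ℤ)) (A : Finset (ℤ × ℤ)) :
    Set (ℤ × ℤ → G) :=
  {x | ∀ v ∈ Λ, ∑ u ∈ A, x (v + u) = 0}

section tilingCode
variable {G : Type*} [AddCommGroup G] {Λ : AddSubgroup (ℤ × ℤ)} {A : Finset (ℤ × ℤ)}

lemma isRecoverable2_tilingCode {R : Set (ℤ × ℤ)}
    (hAR : ∀ u ∈ A, ∀ u' ∈ A, u ≠ u' → u - u' ∈ R) (hcov : ∀ w, ∃ u ∈ A, w - u ∈ Λ) :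
    IsRecoverable2 R (tilingCode G Λ A) := by
  classical
  intro w
  obtain ⟨u₀, hu₀, hwΛ⟩ := hcov w
  refine ⟨fun x => -∑ u ∈ A.erase u₀, x (w + (u - u₀)), fun x y hxy => ?_, fun x hx => ?_⟩
  · refine congrArg Neg.neg (sum_congr rfl fun u hu => hxy _ ?_)
    obtain ⟨hne, hu⟩ := mem_erase.1 hu
    exact hAR u hu u₀ hu₀ hne
  · have hsum := hx _ hwΛ
    rw [← add_sum_erase _ _ hu₀, sub_add_cancel] at hsum
    rw [neg_eq_iff_add_eq_zero, add_comm, ← hsum]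
    congr 1
    exact sum_congr rfl fun u _ => by congr 1; abel

lemma exists_mem_tilingCode_eqOn_compl (hA : IsLatticeTile Λ A) (y : ℤ × ℤ → G) :
    ∃ x ∈ tilingCode G Λ A, ∀ w ∉ Λ, x w = y w := by
  classical
  refine ⟨fun w => if w ∈ Λ then -∑ u ∈ A.erase 0, y (w + u) else y w, fun v hv => ?_,
    fun w hw => if_neg hw⟩
  have hoff : ∀ u ∈ A.erase 0, v + u ∉ Λ := fun u hu hvu =>
    (mem_erase.1 hu).1 (hA.eq_zero_of_mem (mem_erase.1 hu).2 (by simpa using Λ.sub_mem hvu hv))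
  rw [← add_sum_erase _ _ hA.zero_mem, add_zero]
  dsimp only
  rw [if_pos hv, sum_congr rfl fun u hu => if_neg (hoff u hu), neg_add_cancel]

lemma pow_le_blockCount2_tilingCode [Fintype G] (hA : IsLatticeTile Λ A) (n : ℕ) :
    Fintype.card G ^ (n * n - #(latticePts Λ 0 n)) ≤ blockCount2 (tilingCode G Λ A) n := by
  classical
  have hsub : latticePts Λ 0 n ⊆ Ico 0 (n : ℤ) ×ˢ Ico 0 (n : ℤ) := latticePts_subset le_rfl le_rfl
  set S := (latticePts Λ 0 n).preimage (cell n) (cell_injective n).injOn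
  rw [← card_preimage_cell _ hsub, blockCount2_eq_natCard_image]
  change _ ^ (_ - #S) ≤ _
  convert pow_le_natCard_of_forall_exists_eqOn_compl S ?_ using 2
  · simp
  intro z
  have hinj : Function.Injective fun p : {p // p ∉ S} => cell n p :=
    (cell_injective n).comp Subtype.val_injective
  obtain ⟨x, hx, hxy⟩ := exists_mem_tilingCode_eqOn_compl hA (Function.extend _ z 0)
  refine ⟨x ∘ cell n, ⟨x, hx, rfl⟩, fun p hp => ?_⟩
  have hpΛ : cell n p ∉ Λ := fun h =>
    hp (mem_preimage.2 (mem_latticePts.2 ⟨mem_range_cell.1 ⟨p, rfl⟩, h⟩))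
  exact (hxy _ hpΛ).trans (hinj.extend_apply z 0 ⟨p, hp⟩)

end tilingCode

lemma Real.logb_natCast_le_of_le_pow {q N m : ℕ} (hq : 1 < q) (h : N ≤ q ^ m) :
    Real.logb q N ≤ m := by
  have hq' : (1 : ℝ) < q := by exact_mod_cast hq
  rcases N.eq_zero_or_pos with rfl | hN
  · simp
  calc Real.logb q N ≤ Real.logb q ((q ^ m : ℕ) : ℝ) :=
        Real.logb_le_logb_of_le hq' (by exact_mod_cast hN) (by exact_mod_cast h)
    _ = m := by rw [Nat.cast_pow, Real.logb_pow, Real.logb_self_eq_one hq', mul_one]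

lemma Real.le_logb_natCast_of_pow_le {q N m : ℕ} (hq : 1 < q) (h : q ^ m ≤ N) :
    (m : ℝ) ≤ Real.logb q N := by
  have hq' : (1 : ℝ) < q := by exact_mod_cast hq
  calc (m : ℝ) = Real.logb q ((q ^ m : ℕ) : ℝ) := by
        rw [Nat.cast_pow, Real.logb_pow, Real.logb_self_eq_one hq', mul_one]
    _ ≤ Real.logb q N :=
        Real.logb_le_logb_of_le hq' (by positivity) (by exact_mod_cast h)

section Rate
variable {Q : Type*} {q : ℕ} {X : Set (ℤ × ℤ → Q)} {m : ℕ → ℕ} {δ : ℝ}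

lemma rate2_le_of_blockCount2_le_pow (hq : 1 < q)
    (hm : Tendsto (fun n : ℕ => (m n : ℝ) / n ^ 2) atTop (𝓝 δ))
    (hX : ∀ n, blockCount2 X n ≤ q ^ m n) : rate2 q X ≤ δ := by
  rw [rate2, ← hm.limsup_eq]
  refine limsup_le_limsup (Eventually.of_forall fun n => ?_)
    (isCoboundedUnder_le_of_le atTop (x := 0) fun n => ?_) hm.isBoundedUnder_le
  · exact div_le_div_of_nonneg_right (Real.logb_natCast_le_of_le_pow hq (hX n)) (sq_nonneg _)
  · exact div_nonneg (div_nonneg (Real.log_natCast_nonneg _) (Real.log_natCast_nonneg _))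
      (sq_nonneg _)

lemma le_rate2_of_pow_le_blockCount2 [Fintype Q] (hQ : Fintype.card Q = q) (hq : 1 < q)
    (hm : Tendsto (fun n : ℕ => (m n : ℝ) / n ^ 2) atTop (𝓝 δ))
    (hX : ∀ n, q ^ m n ≤ blockCount2 X n) : δ ≤ rate2 q X := by
  rw [rate2, ← hm.limsup_eq]
  refine limsup_le_limsup (Eventually.of_forall fun n => ?_) hm.isCoboundedUnder_le
    (isBoundedUnder_of ⟨1, fun n => ?_⟩)
  · exact div_le_div_of_nonneg_right (Real.le_logb_natCast_of_pow_le hq (hX n)) (sq_nonneg _)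
  · refine div_le_one_of_le₀ ?_ (sq_nonneg _)
    have := Real.logb_natCast_le_of_le_pow hq (hQ ▸ blockCount2_le_card_pow X n)
    exact_mod_cast this.trans_eq (by push_cast; ring)

end Rate

section RateBounds
variable {q : ℕ} {a c : ℤ} (ha : 0 < a) (hc : 0 < c) {b : ℤ}
include ha hc

lemma rate2_le_of_isRecoverable2 {Q : Type*} [Fintype Q] (hQ : Fintype.card Q = q) (hq : 1 < q)
    {R : Set (ℤ × ℤ)} {ρ : ℕ} (hR : ∀ u ∈ R, |u.1| ≤ ρ ∧ |u.2| ≤ ρ)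
    (hRΛ : ∀ u ∈ R, u ∉ hnfLattice a c b) {X : Set (ℤ × ℤ → Q)} (hX : IsRecoverable2 R X) :
    rate2 q X ≤ 1 - 1 / (a * c) :=
  rate2_le_of_blockCount2_le_pow hq (tendsto_sq_sub_card_latticePts_hnfLattice ha hc b ρ)
    fun n => hQ ▸ blockCount2_le_of_isRecoverable2 hR hRΛ hX n

lemma le_rate2_tilingCode {G : Type*} [AddCommGroup G] [Fintype G] (hG : Fintype.card G = q)
    (hq : 1 < q) {A : Finset (ℤ × ℤ)} (hA : IsLatticeTile (hnfLattice a c b) A) :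
    1 - 1 / (a * c) ≤ rate2 q (tilingCode G (hnfLattice a c b) A) :=
  le_rate2_of_pow_le_blockCount2 hG hq
    (by simpa using tendsto_sq_sub_card_latticePts_hnfLattice ha hc b 0)
    fun n => hG ▸ pow_le_blockCount2_tilingCode hA n

end RateBounds

theorem sSup_recoverableRates_eq {r q : ℕ} (hq : 1 < q) {a c b : ℤ} (ha : 0 < a) (hc : 0 < c)
    {A : Finset (ℤ × ℤ)} (hΛ : ∀ v ∈ hnfLattice a c b, v ≠ 0 → (r : ℤ) < |v.1| + |v.2|)
    (hA : ∀ u ∈ A, ∀ u' ∈ A, |u.1 - u'.1| + |u.2 - u'.2| ≤ r) (h0 : 0 ∈ A)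
    (hcov : ∀ w, ∃ u ∈ A, w - u ∈ hnfLattice a c b) :
    sSup (recoverableRates r q) = 1 - 1 / (a * c) := by
  have : NeZero q := ⟨by omega⟩
  have hR : ∀ u ∈ l1PuncturedBall r, |u.1| ≤ r ∧ |u.2| ≤ r :=
    fun u hu => ⟨by linarith [hu.2, abs_nonneg u.2], by linarith [hu.2, abs_nonneg u.1]⟩
  have hRΛ : ∀ u ∈ l1PuncturedBall r, u ∉ hnfLattice a c b :=
    fun u hu huΛ => (hΛ u huΛ hu.1).not_ge hu.2
  have hcode := isRecoverable2_tilingCode (G := ZMod q) (R := l1PuncturedBall r)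
    (fun u hu u' hu' hne => ⟨sub_ne_zero.2 hne, hA u hu u' hu'⟩) hcov
  refine IsGreatest.csSup_eq ⟨⟨ZMod q, inferInstance, ZMod.card q, _, hcode, le_antisymm
    (rate2_le_of_isRecoverable2 ha hc (ZMod.card q) hq hR hRΛ hcode)
    (le_rate2_tilingCode ha hc (ZMod.card q) hq
      (isLatticeTile_of_abs_add_abs_le hΛ hA h0 hcov))⟩, ?_⟩
  rintro _ ⟨Q, _, hQ, X, hX, rfl⟩
  exact rate2_le_of_isRecoverable2 ha hc hQ hq hR hRΛ hX

section Odd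
variable {k : ℤ}

lemma two_mul_le_abs_add_abs_of_mem_hnfLattice {v : ℤ × ℤ}
    (hv : v ∈ hnfLattice (2 * k) k 1) (h0 : v ≠ 0) : 2 * k ≤ |v.1| + |v.2| := by
  obtain ⟨⟨m, hm⟩, hsub⟩ := hv
  rw [one_mul] at hsub
  have hadd : 2 * k ∣ v.1 + v.2 := by
    rw [show v.1 + v.2 = (v.1 - v.2) + 2 * k * m by linear_combination 2 * hm]
    exact dvd_add hsub (dvd_mul_right _ _)
  have hdvd_le {z : ℤ} (hz : 2 * k ∣ z) (hz0 : z ≠ 0) : 2 * k ≤ |z| :=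
    Int.le_of_dvd (abs_pos.2 hz0) (by simpa using hz)
  by_cases hd : v.1 - v.2 = 0
  · have hs : v.1 + v.2 ≠ 0 := fun hs => h0 (Prod.ext_iff.2 ⟨by simp; omega, by simp; omega⟩)
    exact (hdvd_le hadd hs).trans (abs_add_le _ _)
  · exact (hdvd_le hsub hd).trans (abs_sub _ _)

-- In the coordinates `(x + y, x - y)` this is the square `[0, 2k)²`, and `hnfLattice (2k) k 1`
-- is `(2kℤ)²`.
noncomputable def rotatedSquare (k : ℤ) : Finset (ℤ × ℤ) :=
  {u ∈ Icc 0 (2 * k) ×ˢ Icc (-k) k |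
    0 ≤ u.1 + u.2 ∧ u.1 + u.2 < 2 * k ∧ 0 ≤ u.1 - u.2 ∧ u.1 - u.2 < 2 * k}

lemma mem_rotatedSquare {u : ℤ × ℤ} : u ∈ rotatedSquare k ↔
    0 ≤ u.1 + u.2 ∧ u.1 + u.2 < 2 * k ∧ 0 ≤ u.1 - u.2 ∧ u.1 - u.2 < 2 * k := by
  simp only [rotatedSquare, mem_filter, mem_product, mem_Icc, and_iff_right_iff_imp]
  omega

lemma abs_add_abs_le_of_mem_rotatedSquare {u u' : ℤ × ℤ} (hu : u ∈ rotatedSquare k)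
    (hu' : u' ∈ rotatedSquare k) : |u.1 - u'.1| + |u.2 - u'.2| ≤ 2 * k - 1 := by
  rw [mem_rotatedSquare] at hu hu'
  rw [Int.abs_eq_natAbs, Int.abs_eq_natAbs]
  omega

lemma exists_mem_rotatedSquare_sub_mem (hk : 0 < k) (w : ℤ × ℤ) :
    ∃ u ∈ rotatedSquare k, w - u ∈ hnfLattice (2 * k) k 1 := by
  set α := (w.1 + w.2) / (2 * k)
  set β := (w.1 - w.2) / (2 * k)
  have h₁ := Int.mul_ediv_add_emod (w.1 + w.2) (2 * k)
  have h₂ := Int.mul_ediv_add_emod (w.1 - w.2) (2 * k)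
  have := Int.emod_nonneg (w.1 + w.2) (by omega : 2 * k ≠ 0)
  have := Int.emod_lt_of_pos (w.1 + w.2) (by omega : 0 < 2 * k)
  have := Int.emod_nonneg (w.1 - w.2) (by omega : 2 * k ≠ 0)
  have := Int.emod_lt_of_pos (w.1 - w.2) (by omega : 0 < 2 * k)
  refine ⟨(w.1 - k * (α + β), w.2 - k * (α - β)), mem_rotatedSquare.2 ⟨?_, ?_, ?_, ?_⟩,
    ⟨α - β, by simp only [Prod.snd_sub]; ring⟩, β, by simp only [Prod.fst_sub, Prod.snd_sub]; ring⟩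
    <;> linarith

end Odd

lemma sSup_recoverableRates_two_mul_add_one {q : ℕ} (hq : 1 < q) (s : ℕ) :
    sSup (recoverableRates (2 * s + 1) q) = 1 - 1 / D1 (2 * s + 1) := by
  have hD : D1 (2 * s + 1) = ((2 * (s + 1) : ℤ) : ℝ) * ((s + 1 : ℤ) : ℝ) := by
    rw [D1, if_pos (by omega)]; push_cast; ring
  rw [hD]
  refine sSup_recoverableRates_eq hq (by positivity) (by positivity) (fun v hv h0 => ?_)
    (fun u hu u' hu' => ?_) (mem_rotatedSquare.2 (by simp))
    (exists_mem_rotatedSquare_sub_mem (by positivity))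
  · have := two_mul_le_abs_add_abs_of_mem_hnfLattice hv h0
    push_cast
    linarith
  · have := abs_add_abs_le_of_mem_rotatedSquare hu hu'
    push_cast
    linarith

section Even
variable {s : ℤ}

lemma two_mul_lt_abs_add_abs_of_eq_add_mul (hs : 0 ≤ s) {x y : ℤ}
    (hx : x = 2 * s ^ 2 + 2 * s + 1 + (2 * s + 1) * y) : 2 * s < |x| + |y| := by
  by_contra! h
  rcases abs_cases x with ⟨h₁, h₂⟩ | ⟨h₁, h₂⟩ <;> rcases abs_cases y with ⟨h₃, h₄⟩ | ⟨h₃, h₄⟩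
  · nlinarith
  · have : s + y + 1 ≤ 0 := by
      by_contra! hc
      nlinarith [mul_nonneg hs (by omega : 0 ≤ s + y)]
    nlinarith
  · nlinarith
  · have : 0 ≤ s + y := by nlinarith
    nlinarith

-- `hnfLattice (2s² + 2s + 1) 1 (2s + 1)` is the lattice of centres of the tiling of `ℤ²` by
-- `l₁`-balls of radius `s`.
lemma two_mul_lt_abs_add_abs_of_mem_hnfLattice (hs : 0 ≤ s) {v : ℤ × ℤ}
    (hv : v ∈ hnfLattice (2 * s ^ 2 + 2 * s + 1) 1 (2 * s + 1)) (h0 : v ≠ 0) :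
    2 * s < |v.1| + |v.2| := by
  obtain ⟨-, t, ht⟩ := hv
  by_contra! h
  -- `|v.1 - (2s + 1) v.2| ≤ (2s + 1) (|v.1| + |v.2|) ≤ (2s + 1) 2s < 2 (2s² + 2s + 1)`
  have ht₁ : |t| ≤ 1 := by
    rcases abs_cases v.1 with ⟨h₁, h₂⟩ | ⟨h₁, h₂⟩ <;>
      rcases abs_cases v.2 with ⟨h₃, h₄⟩ | ⟨h₃, h₄⟩ <;>
      rcases abs_cases t with ⟨h₅, h₆⟩ | ⟨h₅, h₆⟩ <;> nlinarith
  rcases abs_le.1 ht₁ with ⟨ht₁, ht₂⟩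
  interval_cases t
  · exact (two_mul_lt_abs_add_abs_of_eq_add_mul hs (x := -v.1) (y := -v.2) (by linarith)).not_ge
      (by simpa using h)
  · have hx : v.1 = (2 * s + 1) * v.2 := by linarith
    have hy : v.2 = 0 := by
      have : |v.1| = (2 * s + 1) * |v.2| := by rw [hx, abs_mul, abs_of_nonneg (by omega)]
      have : |v.2| < 1 := by nlinarith [abs_nonneg v.2]
      exact abs_eq_zero.1 (le_antisymm (by omega) (abs_nonneg _))
    exact h0 (Prod.ext_iff.2 ⟨by simp [hx, hy], by simp [hy]⟩)
  · exact (two_mul_lt_abs_add_abs_of_eq_add_mul hs (by linarith)).not_ge h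

end Even

noncomputable def l1Ball (s : ℕ) : Finset (ℤ × ℤ) :=
  {u ∈ Icc (-s : ℤ) s ×ˢ Icc (-s : ℤ) s | |u.1| + |u.2| ≤ s}

lemma mem_l1Ball {s : ℕ} {u : ℤ × ℤ} : u ∈ l1Ball s ↔ |u.1| + |u.2| ≤ s := by
  simp only [l1Ball, mem_filter, mem_product, mem_Icc, and_iff_right_iff_imp]
  intro h
  have := abs_nonneg u.1
  have := abs_nonneg u.2
  exact ⟨abs_le.1 (by linarith), abs_le.1 (by linarith)⟩

lemma sum_Icc_two_mul_sub_abs_add_one (s : ℕ) :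
    ∑ y ∈ Icc (-s : ℤ) s, (2 * (s - |y|) + 1) = 2 * (s : ℤ) ^ 2 + 2 * s + 1 := by
  induction s with
  | zero => simp
  | succ s ih =>
    have hIcc : Icc (-(s + 1 : ℕ) : ℤ) (s + 1 : ℕ) =
        insert (-(s + 1 : ℤ)) (insert (s + 1 : ℤ) (Icc (-s : ℤ) s)) := by
      ext; simp only [mem_Icc, mem_insert]; push_cast; omega
    rw [hIcc, sum_insert (by simp; omega), sum_insert (by simp), sum_congr rfl fun y _ =>
      (by push_cast; ring : 2 * (((s + 1 : ℕ) : ℤ) - |y|) + 1 = (2 * (s - |y|) + 1) + 2),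
      sum_add_distrib, ih, sum_const, Int.card_Icc, abs_neg,
      abs_of_nonneg (by positivity : (0 : ℤ) ≤ s + 1)]
    simp only [nsmul_eq_mul]
    push_cast
    rw [show ((s : ℤ) + 1 - -s).toNat = 2 * s + 1 by omega]
    push_cast
    ring

lemma card_l1Ball (s : ℕ) : #(l1Ball s) = 2 * s ^ 2 + 2 * s + 1 := by
  have hrow : ∀ y ∈ Icc (-s : ℤ) s,
      (#{x ∈ Icc (-s : ℤ) s | |x| + |y| ≤ s} : ℤ) = 2 * (s - |y|) + 1 := by
    intro y hy
    have hy' : |y| ≤ s := abs_le.2 (mem_Icc.1 hy)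
    have hrow : {x ∈ Icc (-s : ℤ) s | |x| + |y| ≤ s} = Icc (|y| - s) (s - |y|) := by
      ext x
      simp only [mem_filter, mem_Icc, ← le_sub_iff_add_le (b := |y|), abs_le]
      have := abs_nonneg y
      omega
    rw [hrow, Int.card_Icc, Int.toNat_of_nonneg (by omega)]
    ring
  zify
  rw [l1Ball, card_filter, sum_product_right, sum_congr rfl fun y _ => (card_filter _ _).symm]
  push_cast
  rw [sum_congr rfl hrow, sum_Icc_two_mul_sub_abs_add_one]

lemma exists_mem_sub_mem_hnfLattice_of_card {N : ℕ} (hN : 0 < N) (b : ℤ) {A : Finset (ℤ × ℤ)}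
    (hA : ∀ u ∈ A, ∀ u' ∈ A, u - u' ∈ hnfLattice N 1 b → u = u') (hcard : #A = N)
    (w : ℤ × ℤ) : ∃ u ∈ A, w - u ∈ hnfLattice N 1 b := by
  classical
  have : NeZero N := ⟨hN.ne'⟩
  let φ : ℤ × ℤ → ZMod N := fun v => ((v.1 - b * v.2 : ℤ) : ZMod N)
  have hφ : ∀ v v', φ v = φ v' ↔ v' - v ∈ hnfLattice N 1 b := by
    intro v v'
    rw [ZMod.intCast_eq_intCast_iff_dvd_sub, mem_hnfLattice]
    simp only [one_dvd, true_and, Prod.fst_sub, Prod.snd_sub]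
    ring_nf
  have hinj : Set.InjOn φ A := fun u hu u' hu' h => (hA u' hu' u hu ((hφ u u').1 h)).symm
  have himage : A.image φ = univ :=
    eq_univ_of_card _ (by rw [card_image_of_injOn hinj, hcard, ZMod.card])
  obtain ⟨u, hu, hφu⟩ := mem_image.1 (himage ▸ mem_univ (φ w))
  exact ⟨u, hu, (hφ u w).1 hφu⟩

lemma sSup_recoverableRates_two_mul {q : ℕ} (hq : 1 < q) (s : ℕ) :
    sSup (recoverableRates (2 * s) q) = 1 - 1 / D1 (2 * s) := by
  have hD : D1 (2 * s) = ((2 * s ^ 2 + 2 * s + 1 : ℤ) : ℝ) * ((1 : ℤ) : ℝ) := by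
    rw [D1, if_neg (by omega)]; push_cast; ring
  have hΛ : ∀ v ∈ hnfLattice (2 * s ^ 2 + 2 * s + 1) 1 (2 * s + 1), v ≠ 0 →
      ((2 * s : ℕ) : ℤ) < |v.1| + |v.2| := fun v hv h0 => by
    exact_mod_cast two_mul_lt_abs_add_abs_of_mem_hnfLattice (Nat.cast_nonneg s) hv h0
  have hA : ∀ u ∈ l1Ball s, ∀ u' ∈ l1Ball s,
      |u.1 - u'.1| + |u.2 - u'.2| ≤ ((2 * s : ℕ) : ℤ) := by
    intro u hu u' hu'
    rw [mem_l1Ball] at hu hu'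
    push_cast
    linarith [abs_sub u.1 u'.1, abs_sub u.2 u'.2]
  -- `l1Ball s` injects into `ℤ² / Λ`, which has exactly `#(l1Ball s)` elements
  have hcov := exists_mem_sub_mem_hnfLattice_of_card (N := 2 * s ^ 2 + 2 * s + 1) (by positivity)
    (2 * s + 1) (eq_of_sub_mem_of_abs_add_abs_le (by exact_mod_cast hΛ) hA) (card_l1Ball s)
  rw [hD]
  exact sSup_recoverableRates_eq hq (by positivity) one_pos hΛ hA (mem_l1Ball.2 (by simp))
    (by exact_mod_cast hcov)

theorem stmt14_general (r : ℕ) (q : ℕ) (hq : 2 ≤ q) :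
    sSup {x : ℝ | ∃ (Q : Type) (_ : Fintype Q), Fintype.card Q = q ∧
        ∃ X : Set (ℤ × ℤ → Q),
          IsRecoverable2 {v : ℤ × ℤ | v ≠ 0 ∧ |v.1| + |v.2| ≤ (r : ℤ)} X ∧
          rate2 q X = x} =
      1 - 1 / D1 r := by
  obtain ⟨s, rfl | rfl⟩ := Nat.even_or_odd' r
  · exact sSup_recoverableRates_two_mul hq s
  · exact sSup_recoverableRates_two_mul_add_one hq s

/-- For the `l₁`-ball recovery set of radius `r`, the supremum of rates of
recoverable systems on `ℤ²` over alphabets of size `q` is `1 − 1/D₁(r)`. -/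
theorem stmt14 (r : ℕ) (hr : 1 ≤ r) (q : ℕ) (hq : 2 ≤ q) :
    sSup {x : ℝ | ∃ (Q : Type) (_ : Fintype Q), Fintype.card Q = q ∧
        ∃ X : Set (ℤ × ℤ → Q),
          IsRecoverable2 {v : ℤ × ℤ | v ≠ 0 ∧ |v.1| + |v.2| ≤ (r : ℤ)} X ∧
          rate2 q X = x} =
      1 - 1 / D1 r :=
  stmt14_general r q hq
end

section
/- Let l, r ≥ 1 be integers, let R = {1, ..., r} ∪ {−1, ..., −l} ⊆ ℤ, let m = min{l, r}, and let n ≥ 1 be divisible by m + 1. Let G be the directed graph on vertex set {0, 1, ..., n−1} with an edge from i to j whenever j − i ∈ R. Then for every q ≥ 2, the maximum cardinality of a storage code on G over an alphabet of size q equals q^{n·m/(m+1)}; equivalently, the maximum rate equals m/(m+1). Moreover, {i(m+1) : 0 ≤ i < n/(m+1)} is a maximum DAG set in G. -/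
def IsStorageCode {V Q : Type*} (E : V → V → Prop) (C : Set (V → Q)) : Prop :=
  ∀ v : V, ∃ f : (V → Q) → Q,
    (∀ x y : V → Q, (∀ u : V, E v u → x u = y u) → f x = f y) ∧
    ∀ x ∈ C, f x = x v

def HasCycleIn {V : Type*} (E : V → V → Prop) (S : Set V) : Prop :=
  ∃ (m : ℕ) (f : Fin (m + 1) → V), 0 < m ∧ (∀ i, f i ∈ S) ∧
    f 0 = f (Fin.last m) ∧ ∀ i : Fin m, E (f i.castSucc) (f i.succ)

def IsDagSet {V : Type*} (E : V → V → Prop) (S : Set V) : Prop := ¬ HasCycleIn E S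

/-- The directed graph on `{0,…,n−1}` with an edge `i → j` iff
`j − i ∈ {1,…,r} ∪ {−1,…,−l}`. -/
def lineRel (l r n : ℕ) : Fin n → Fin n → Prop := fun i j =>
  (1 ≤ ((j : ℕ) : ℤ) - ((i : ℕ) : ℤ) ∧ ((j : ℕ) : ℤ) - ((i : ℕ) : ℤ) ≤ (r : ℤ)) ∨
  (-(l : ℤ) ≤ ((j : ℕ) : ℤ) - ((i : ℕ) : ℤ) ∧ ((j : ℕ) : ℤ) - ((i : ℕ) : ℤ) ≤ -1)

/-!
Cut `{0, …, n - 1}` into blocks of `m + 1` consecutive vertices. Two vertices of a block are at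
distance at most `m ≤ min l r`, so every block is a clique with edges in both directions.

Transport a group structure to `Q`. The words whose entries sum to zero on every block form a
storage code, since each entry is minus the sum of the other entries of its block; fixing the
entries off the first vertex of each block gives `q ^ (n - n / (m + 1))` codewords.

Between multiples of `m + 1` all edges point the same way (upwards if `l ≤ r`, downwards if
`r ≤ l`), so these vertices form a DAG set, and by induction along that order a storage code is
determined by its entries off them, which bounds its size by the same power of `q`. Two vertices
of a block form a 2-cycle, so a DAG set has at most one vertex per block.
-/

open Finset

section StorageCode

variable {V Q : Type*} {E : V → V → Prop}

def IsRankFunction (E : V → V → Prop) (S : Set V) (μ : V → ℕ) : Prop :=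
  ∀ v ∈ S, ∀ u ∈ S, E v u → μ u < μ v

theorem IsRankFunction.isDagSet {S : Set V} {μ : V → ℕ} (hμ : IsRankFunction E S μ) :
    IsDagSet E S := by
  rintro ⟨m, f, hm, hfS, hclosed, hstep⟩
  have hanti : StrictAnti (μ ∘ f) :=
    Fin.strictAnti_iff_succ_lt.2 fun i => hμ _ (hfS _) _ (hfS _) (hstep i)
  have := hanti (show (0 : Fin (m + 1)) < Fin.last m by simpa [Fin.lt_def] using hm)
  simp [hclosed] at this

theorem IsDagSet.not_mutual {S : Set V} (hS : IsDagSet E S) {a b : V} (ha : a ∈ S)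
    (hb : b ∈ S) : ¬ (E a b ∧ E b a) := by
  rintro ⟨hab, hba⟩
  refine hS ⟨2, ![a, b, a], two_pos, ?_, rfl, ?_⟩
  · intro i; fin_cases i <;> assumption
  · intro i; fin_cases i <;> assumption

theorem IsStorageCode.mono {C C' : Set (V → Q)} (hC : IsStorageCode E C) (h : C' ⊆ C) :
    IsStorageCode E C' := fun v =>
  let ⟨f, hf, hfC⟩ := hC v
  ⟨f, hf, fun x hx => hfC x (h hx)⟩

theorem IsStorageCode.eq_of_eqOn_compl {C : Set (V → Q)} (hC : IsStorageCode E C) {S : Set V}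
    {μ : V → ℕ} (hμ : IsRankFunction E S μ) {x y : V → Q} (hx : x ∈ C) (hy : y ∈ C)
    (hxy : ∀ v ∉ S, x v = y v) : x = y := by
  suffices ∀ N v, μ v = N → x v = y v from funext fun v => this _ v rfl
  intro N
  induction N using Nat.strong_induction_on with
  | _ N ih =>
    rintro v rfl
    by_cases hv : v ∈ S
    · obtain ⟨f, hf, hfC⟩ := hC v
      rw [← hfC x hx, ← hfC y hy]
      refine hf x y fun u hvu => ?_
      by_cases hu : u ∈ S
      · exact ih _ (hμ v hv u hu hvu) u rfl
      · exact hxy u hu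
    · exact hxy v hv

theorem IsStorageCode.card_le [Fintype V] [Fintype Q] {C : Finset (V → Q)}
    (hC : IsStorageCode E (C : Set (V → Q))) {S : Finset V} {μ : V → ℕ}
    (hμ : IsRankFunction E S μ) : #C ≤ Fintype.card Q ^ (Fintype.card V - #S) := by
  classical
  have := card_le_card_of_injOn (fun x (v : {v // v ∉ S}) => x v) (t := univ)
    (fun _ _ => mem_coe.2 (mem_univ _)) fun x hx y hy hxy =>
      hC.eq_of_eqOn_compl hμ hx hy fun v hv => congrFun hxy ⟨v, hv⟩
  simpa [Fintype.card_subtype_compl] using this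

end StorageCode

section Blocks

variable {V β A : Type*} {E : V → V → Prop} [DecidableEq β] {blk : V → β}

theorem isStorageCode_blockSum_eq_zero [Fintype V] [AddCommGroup A]
    (hE : ∀ u v, u ≠ v → blk u = blk v → E u v) :
    IsStorageCode E {x : V → A | ∀ v, ∑ u with blk u = blk v, x u = 0} := by
  classical
  intro v
  refine ⟨fun x => -∑ u ∈ ({u | blk u = blk v} : Finset V).erase v, x u,
    fun x y hxy => ?_, fun x hx => ?_⟩
  · refine congrArg _ (sum_congr rfl fun u hu => hxy u ?_)
    exact hE v u (ne_of_mem_erase hu).symm (mem_filter.1 (mem_of_mem_erase hu)).2.symm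
  · rw [neg_eq_iff_add_eq_zero, add_comm, add_sum_erase _ _ (by simp)]
    exact hx v

theorem exists_card_eq_blockSum_eq_zero [Fintype V] [Fintype A] [AddCommGroup A]
    {T : Finset V} (hT : ∀ v, #{u ∈ T | blk u = blk v} = 1) :
    ∃ C : Finset (V → A), (∀ x ∈ C, ∀ v, ∑ u with blk u = blk v, x u = 0) ∧
      #C = Fintype.card A ^ (Fintype.card V - #T) := by
  classical
  -- `y g` vanishes on `T`, so subtracting its block sum at the one vertex of `T` in each block
  -- makes every block sum zero.
  let y : ({v // v ∉ T} → A) → V → A := fun g v => if h : v ∈ T then 0 else g ⟨v, h⟩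
  let ext : ({v // v ∉ T} → A) → V → A := fun g v =>
    y g v - if v ∈ T then ∑ w with blk w = blk v, y g w else 0
  have hinj : Function.Injective ext := fun g g' h => funext fun ⟨v, hv⟩ => by
    simpa [ext, y, hv] using congrFun h v
  refine ⟨univ.image ext, ?_, ?_⟩
  · simp only [mem_image, mem_univ, true_and]
    rintro _ ⟨g, rfl⟩ v
    calc ∑ u with blk u = blk v, ext g u
        = ∑ u with blk u = blk v,
            (y g u - if u ∈ T then ∑ w with blk w = blk v, y g w else 0) :=
          sum_congr rfl fun u hu => by simp only [ext, (mem_filter.1 hu).2]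
      _ = 0 := by
          rw [sum_sub_distrib, sum_ite_mem, sum_const, filter_inter, univ_inter, hT v, one_smul,
            sub_self]
  · rw [card_image_of_injective _ hinj]
    simp [Fintype.card_subtype_compl]

theorem IsDagSet.card_le (hE : ∀ u v, u ≠ v → blk u = blk v → E u v) {T : Finset V}
    (hT : ∀ v, ∃ t ∈ T, blk t = blk v) {S : Finset V} (hS : IsDagSet E (S : Set V)) :
    #S ≤ #T := by
  have hinj : Set.InjOn blk S := fun a ha b hb hab => by
    by_contra hne
    exact hS.not_mutual ha hb ⟨hE a b hne hab, hE b a (Ne.symm hne) hab.symm⟩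
  calc #S = #(S.image blk) := (card_image_of_injOn hinj).symm
    _ ≤ #(T.image blk) := card_le_card fun b hb => by
        obtain ⟨s, -, rfl⟩ := mem_image.1 hb
        obtain ⟨t, ht, hts⟩ := hT s
        exact mem_image.2 ⟨t, ht, hts⟩
    _ ≤ #T := card_image_le

end Blocks

section LineGraph

variable {l r n k : ℕ}

def multiples (n k : ℕ) : Finset (Fin n) := univ.filter fun i => k ∣ (i : ℕ)

theorem mem_multiples {i : Fin n} : i ∈ multiples n k ↔ k ∣ (i : ℕ) := by
  simp [multiples]

theorem card_multiples (c : ℕ) (hk : 0 < k) : #(multiples (k * c) k) = c := by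
  refine .trans ?_ (card_fin c)
  refine card_bij (fun i _ => ⟨i / k, Nat.div_lt_of_lt_mul i.2⟩) (fun _ _ => mem_univ _) ?_ ?_
  · intro a ha b hb h
    rw [mem_multiples] at ha hb
    rw [Fin.ext_iff, ← Nat.div_mul_cancel ha, ← Nat.div_mul_cancel hb]
    exact congrArg (· * k) (Fin.mk.inj h)
  · intro j _
    exact ⟨⟨k * j, Nat.mul_lt_mul_of_pos_left j.2 hk⟩, mem_multiples.2 (dvd_mul_right _ _),
      Fin.ext (Nat.mul_div_cancel_left _ hk)⟩

theorem card_multiples_filter_div_eq (hk : 0 < k) (v : Fin n) :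
    #{u ∈ multiples n k | u.val / k = v.val / k} = 1 := by
  refine card_eq_one.2 ⟨⟨k * (v / k), (Nat.mul_div_le v k).trans_lt v.2⟩, ?_⟩
  ext u
  simp only [mem_filter, mem_multiples, mem_singleton, Fin.ext_iff]
  constructor
  · rintro ⟨hd, he⟩
    rw [← he, Nat.mul_div_cancel' hd]
  · rintro hu
    rw [hu]
    exact ⟨dvd_mul_right _ _, Nat.mul_div_cancel_left _ hk⟩

theorem lineRel_swap {i j : Fin n} (h : lineRel l r n i j) : lineRel r l n j i := by
  unfold lineRel at h ⊢; omega

theorem lineRel_of_div_eq (hk : 0 < k) (hkl : k ≤ l + 1) (hkr : k ≤ r + 1) {i j : Fin n}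
    (hij : i ≠ j) (h : (i : ℕ) / k = j / k) : lineRel l r n i j := by
  have hi := Nat.div_add_mod (i : ℕ) k
  have hj := Nat.div_add_mod (j : ℕ) k
  have := Nat.mod_lt (i : ℕ) hk
  have := Nat.mod_lt (j : ℕ) hk
  have := Fin.val_ne_of_ne hij
  rw [h] at hi
  unfold lineRel
  generalize k * ((j : ℕ) / k) = t, (i : ℕ) % k = a, (j : ℕ) % k = b at *
  omega

theorem lt_of_lineRel_of_dvd (hlk : l < k) {i j : Fin n} (hi : k ∣ (i : ℕ))
    (hj : k ∣ (j : ℕ)) (h : lineRel l r n i j) : (i : ℕ) < j := by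
  unfold lineRel at h
  by_contra! hji
  have := Nat.le_of_dvd (by omega) (Nat.dvd_sub hi hj)
  omega

theorem exists_isRankFunction_lineRel_multiples (hk : min l r < k) :
    ∃ μ : Fin n → ℕ, IsRankFunction (lineRel l r n) ↑(multiples n k) μ := by
  rcases le_total l r with hlr | hrl
  · refine ⟨fun i => n - i, fun v hv u hu h => ?_⟩
    have := lt_of_lineRel_of_dvd (by omega) (mem_multiples.1 hv) (mem_multiples.1 hu) h
    have := u.2
    dsimp only
    omega
  · exact ⟨fun i => i, fun v hv u hu h =>
      lt_of_lineRel_of_dvd (by omega) (mem_multiples.1 hu) (mem_multiples.1 hv) (lineRel_swap h)⟩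

end LineGraph

theorem stmt19_general (l r : ℕ) (n q : ℕ)
    (hq : 2 ≤ q) (hdvd : (min l r + 1) ∣ n)
    (Q : Type*) [Fintype Q] (hQ : Fintype.card Q = q) :
    IsGreatest {m : ℕ | ∃ C : Finset (Fin n → Q),
        IsStorageCode (lineRel l r n) (↑C : Set (Fin n → Q)) ∧ C.card = m}
      (q ^ (n * min l r / (min l r + 1))) ∧
    IsDagSet (lineRel l r n)
      (↑(Finset.univ.filter fun i : Fin n => (min l r + 1) ∣ (i : ℕ)) : Set (Fin n)) ∧
    ∀ S : Finset (Fin n), IsDagSet (lineRel l r n) (↑S : Set (Fin n)) →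
      S.card ≤ (Finset.univ.filter fun i : Fin n => (min l r + 1) ∣ (i : ℕ)).card := by
  set m := min l r
  obtain ⟨c, rfl⟩ := hdvd
  have hk : 0 < m + 1 := m.succ_pos
  have hE : ∀ u v : Fin ((m + 1) * c), u ≠ v → u.val / (m + 1) = v.val / (m + 1) →
      lineRel l r _ u v := fun _ _ => lineRel_of_div_eq hk (by omega) (by omega)
  have hT := card_multiples_filter_div_eq (n := (m + 1) * c) hk
  obtain ⟨μ, hμ⟩ := exists_isRankFunction_lineRel_multiples (l := l) (r := r)
    (n := (m + 1) * c) (lt_add_one m)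
  have hexp : (m + 1) * c * m / (m + 1) =
      Fintype.card (Fin ((m + 1) * c)) - #(multiples ((m + 1) * c) (m + 1)) := by
    rw [Fintype.card_fin, card_multiples c hk, mul_assoc, Nat.mul_div_cancel_left _ hk,
      add_one_mul, Nat.add_sub_cancel, mul_comm]
  have : NeZero q := ⟨by omega⟩
  let : AddCommGroup Q :=
    (Fintype.equivOfCardEq (by rw [hQ, ZMod.card q])).addCommGroup (β := ZMod q)
  refine ⟨⟨?_, ?_⟩, hμ.isDagSet, fun S hS => IsDagSet.card_le hE (fun v => ?_) hS⟩
  · obtain ⟨C, hC, hcard⟩ := exists_card_eq_blockSum_eq_zero (A := Q) hT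
    exact ⟨C, (isStorageCode_blockSum_eq_zero hE).mono hC, by rw [hcard, hQ, hexp]⟩
  · rintro _ ⟨C, hC, rfl⟩
    rw [hexp, ← hQ]
    exact hC.card_le hμ
  · obtain ⟨t, ht⟩ := card_pos.1 (zero_lt_one.trans_eq (hT v).symm)
    exact ⟨t, mem_filter.1 ht⟩

/-- For `R = {1,…,r} ∪ {−1,…,−l}`, `m = min{l,r}` and `(m+1) ∣ n`, the maximum
cardinality of a storage code on `Z_{R,n}` over an alphabet of size `q` is
`q^{n·m/(m+1)}`, and the multiples of `m+1` form a maximum DAG set. -/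
theorem stmt19 (l r : ℕ) (hl : 1 ≤ l) (hr : 1 ≤ r) (n q : ℕ) (hn : 1 ≤ n)
    (hq : 2 ≤ q) (hdvd : (min l r + 1) ∣ n)
    (Q : Type*) [Fintype Q] (hQ : Fintype.card Q = q) :
    IsGreatest {m : ℕ | ∃ C : Finset (Fin n → Q),
        IsStorageCode (lineRel l r n) (↑C : Set (Fin n → Q)) ∧ C.card = m}
      (q ^ (n * min l r / (min l r + 1))) ∧
    IsDagSet (lineRel l r n)
      (↑(Finset.univ.filter fun i : Fin n => (min l r + 1) ∣ (i : ℕ)) : Set (Fin n)) ∧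
    ∀ S : Finset (Fin n), IsDagSet (lineRel l r n) (↑S : Set (Fin n)) →
      S.card ≤ (Finset.univ.filter fun i : Fin n => (min l r + 1) ∣ (i : ℕ)).card :=
  stmt19_general l r n q hq hdvd Q hQ
end
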